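/- arXiv:1009.5106 — 2 statements merged into one kernel-verified Lean document; each statement's English description precedes it below -/
import Mathlib

section
/- The cyclic sequence 1,(2,3,...,n) repeated (n-2) times, followed by 2 — i.e. the cycle 1,2,...,n,2,...,n,...,2,...,n,2 of length (n-1)(n-2)+2 — contains every permutation of {1,2,...,n} as a subsequence of some rotation of the cycle. Hence r(n) ≤ n² - 3n + 4. -/
/-- A cycle `c` of elements of `{1,...,n}` is a rosary of degree `n` if every
permutation of `{1,...,n}` occurs as a subsequence of some rotation of `c`. -/
def IsRosary (n : ℕ) (c : List ℕ) : Prop :=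
  (∀ x ∈ c, 1 ≤ x ∧ x ≤ n) ∧
  ∀ p : List ℕ, p.Perm (List.range' 1 n) → ∃ j, p.Sublist (c.rotate j)

/-- `rosaryNumber n` is the minimal length of a rosary of degree `n`. -/
noncomputable def rosaryNumber (n : ℕ) : ℕ :=
  sInf {r | ∃ c : List ℕ, c.length = r ∧ IsRosary n c}

/-!
Write `B = [2, 3, …, n]` and `T = [3, …, n]`. The cycle is `1 Bⁿ⁻² 2`, and since `Bᵏ 2 = 2 (T 2)ᵏ`,
both `Bᵏ 2 1 Bˢ` and `(T 2)ᵏ 1 Bˢ 2` are rotations of it whenever `k + s = n - 2`.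
A word of length `m` over the letters of a block fits into `m` copies of the block, and a word
without repetitions over `B` that contains `2` fits into `Bᵐ⁻¹ 2`: the `2` shares a block with
the letter after it, or uses the final `2`. Split a permutation as `a 1 b`. If `2` occurs in `a`,
embed `a` into `B^(|a|-1) 2` and `b` into `B^|b|`; otherwise `a` is a word over `T` and embeds
into `(T 2)^|a|`, while `b` embeds into `B^(|b|-1) 2`.
-/

namespace List

variable {α : Type*}

theorem sublist_flatten_replicate_length {l q : List α} (h : ∀ x ∈ q, x ∈ l) :
    q <+ (replicate q.length l).flatten := by
  induction q with
  | nil => simp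
  | cons x q ih =>
    rw [length_cons, replicate_succ, flatten_cons]
    exact (singleton_sublist.2 (h x mem_cons_self)).append
      (ih fun z hz => h z (mem_cons_of_mem x hz))

theorem flatten_replicate_cons_append_singleton (k : ℕ) (y : α) (t : List α) :
    (replicate k (y :: t)).flatten ++ [y] = y :: (replicate k (t ++ [y])).flatten := by
  induction k with
  | zero => rfl
  | succ k ih => simp [replicate_succ, ih]

theorem Nodup.sublist_flatten_replicate_append {y : α} {t q : List α} (hq : q.Nodup)
    (hsub : ∀ x ∈ q, x ∈ y :: t) (hy : y ∈ q) :
    q <+ (replicate (q.length - 1) (y :: t)).flatten ++ [y] := by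
  induction q with
  | nil => simp at hy
  | cons x r ih =>
    rw [nodup_cons] at hq
    rcases eq_or_ne x y with rfl | hxy
    · rw [flatten_replicate_cons_append_singleton, length_cons, Nat.add_sub_cancel]
      refine (sublist_flatten_replicate_length fun z hz => ?_).cons_cons x
      rcases mem_cons.1 (hsub z (mem_cons_of_mem x hz)) with rfl | hzt
      · exact absurd hz hq.1
      · exact mem_append_left _ hzt
    · have hyr : y ∈ r := (mem_cons.1 hy).resolve_left hxy.symm
      have hlen : (x :: r).length - 1 = r.length - 1 + 1 := by
        have := length_pos_of_mem hyr
        simp only [length_cons]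
        omega
      rw [hlen, replicate_succ, flatten_cons, append_assoc]
      exact (singleton_sublist.2 (hsub x mem_cons_self)).append
        (ih hq.2 (fun z hz => hsub z (mem_cons_of_mem x hz)) hyr)

theorem isRotated_cons_flatten_replicate_append (x y : α) (t : List α) (s k : ℕ) :
    x :: ((replicate (s + k) (y :: t)).flatten ++ [y]) ~r
      ((replicate k (y :: t)).flatten ++ [y]) ++ x :: (replicate s (y :: t)).flatten := by
  have h := isRotated_append (l := x :: (replicate s (y :: t)).flatten)
    (l' := (replicate k (y :: t)).flatten ++ [y])
  rwa [cons_append, ← append_assoc, ← flatten_append, ← replicate_add] at h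

theorem isRotated_cons_flatten_replicate_append' (x y : α) (t : List α) (s k : ℕ) :
    x :: ((replicate (s + k) (y :: t)).flatten ++ [y]) ~r
      (replicate k (t ++ [y])).flatten ++ x :: ((replicate s (y :: t)).flatten ++ [y]) := by
  have h := isRotated_append (l := x :: ((replicate s (y :: t)).flatten ++ [y]))
    (l' := (replicate k (t ++ [y])).flatten)
  rwa [cons_append, append_assoc, singleton_append, ← flatten_replicate_cons_append_singleton,
    ← append_assoc, ← flatten_append, ← replicate_add] at h

theorem IsRotated.exists_sublist_rotate {p c r : List α} (hc : c ~r r) (hp : p <+ r) :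
    ∃ j, p <+ c.rotate j := by
  obtain ⟨j, rfl⟩ := hc
  exact ⟨j, hp⟩

end List

open List

theorem exists_sublist_rotate_gupta_cycle {n : ℕ} (hn : 1 < n) {p : List ℕ}
    (hp : p ~ range' 1 n) :
    ∃ j, p <+ (1 :: ((replicate (n - 2) (range' 2 (n - 1))).flatten ++ [2])).rotate j := by
  obtain ⟨a, b, rfl⟩ := append_of_mem (hp.mem_iff.2 (mem_range'_1.2 ⟨le_rfl, by omega⟩))
  have hp' : 1 :: (a ++ b) ~ range' 1 n := perm_middle.symm.trans hp
  have hlen : a.length + b.length + 1 = n := by simpa using hp'.length_eq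
  obtain ⟨h1, hnd⟩ := nodup_cons.1 (hp'.nodup_iff.2 nodup_range')
  have hB : range' 2 (n - 1) = 2 :: range' 3 (n - 2) := by
    rw [show n - 1 = n - 2 + 1 by omega, range'_succ]
  have hmem : ∀ x ∈ a ++ b, x ∈ 2 :: range' 3 (n - 2) := by
    intro x hx
    have hx1 : x ≠ 1 := by rintro rfl; exact h1 hx
    have := mem_range'_1.1 (hp'.subset (mem_cons_of_mem 1 hx))
    rw [← hB, mem_range'_1]
    omega
  have hmem_a : ∀ x ∈ a, x ∈ 2 :: range' 3 (n - 2) := fun x hx => hmem x (mem_append_left b hx)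
  have hmem_b : ∀ x ∈ b, x ∈ 2 :: range' 3 (n - 2) := fun x hx => hmem x (mem_append_right a hx)
  rw [hB]
  generalize range' 3 (n - 2) = T at hmem_a hmem_b ⊢
  by_cases h2a : 2 ∈ a
  · have ha := (nodup_append.1 hnd).1.sublist_flatten_replicate_append hmem_a h2a
    have hb := sublist_flatten_replicate_length hmem_b
    rw [show n - 2 = b.length + (a.length - 1) by have := length_pos_of_mem h2a; omega]
    exact (isRotated_cons_flatten_replicate_append 1 2 _ _ _).exists_sublist_rotate
      (ha.append (hb.cons_cons 1))
  · have h2b : 2 ∈ b := by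
      have h2 : 2 ∈ 1 :: (a ++ b) := hp'.mem_iff.2 (mem_range'_1.2 ⟨by omega, by omega⟩)
      exact (mem_append.1 ((mem_cons.1 h2).resolve_left (by decide))).resolve_left h2a
    have ha : a <+ (replicate a.length (T ++ [2])).flatten := by
      refine sublist_flatten_replicate_length fun x hx => ?_
      rcases mem_cons.1 (hmem_a x hx) with rfl | hxT
      · exact absurd hx h2a
      · exact mem_append_left _ hxT
    have hb := (nodup_append.1 hnd).2.1.sublist_flatten_replicate_append hmem_b h2b
    rw [show n - 2 = (b.length - 1) + a.length by have := length_pos_of_mem h2b; omega]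
    exact (isRotated_cons_flatten_replicate_append' 1 2 _ _ _).exists_sublist_rotate
      (ha.append (hb.cons_cons 1))

theorem isRosary_gupta_cycle {n : ℕ} (hn : 1 < n) :
    IsRosary n (1 :: ((replicate (n - 2) (range' 2 (n - 1))).flatten ++ [2])) := by
  refine ⟨fun x hx => ?_, fun _ hp => exists_sublist_rotate_gupta_cycle hn hp⟩
  simp only [mem_cons, mem_append, mem_flatten, mem_replicate, ne_eq, ↓existsAndEq, and_true,
    mem_range'_1, not_mem_nil, or_false] at hx
  omega

theorem gupta_trivial_bound (n : ℕ) (hn : 1 < n) :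
    IsRosary n (1 :: ((List.replicate (n - 2) (List.range' 2 (n - 1))).flatten ++ [2])) ∧
    rosaryNumber n ≤ n ^ 2 + 4 - 3 * n := by
  have hros := isRosary_gupta_cycle hn
  refine ⟨hros, Nat.sInf_le ⟨_, ?_, hros⟩⟩
  obtain ⟨m, rfl⟩ : ∃ m, n = m + 2 := ⟨n - 2, by omega⟩
  simp only [length_cons, length_append, length_flatten, map_replicate, sum_replicate,
    length_range', length_nil, smul_eq_mul, Nat.add_sub_cancel, Nat.add_succ_sub_one]
  refine (Nat.sub_eq_of_eq_add ?_).symm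
  ring
end

section
/- Let a₁,...,a_n be a permutation of {1,...,n} viewed as a cycle, with code c_i = H(a_{i+1} - a_i) (indices mod n, H the Heaviside step function) containing x ones at positions i₁ < ... < i_x and y = n - x zeros, and let λ_j denote the number of zeros between the j-th one and the (j+1)-st one (cyclically), so λ₁ + ... + λ_x = y. If there exist positive integers K, M and an index i with λ_{i+1} + λ_{i+2} + ... + λ_{i+K} ≥ y - M + 1 (indices of λ taken mod x), then the cycle a₁,...,a_n is a subsequence of the cycle (1,2,...,n) repeated (M-1) times, followed by (1,2,...,n-1), then (n,n-1,...,2,1) repeated (K-1) times, then (n,n-1,...,3,2). -/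
/-- The cyclic code of a cycle `a₁,...,aₙ`: entry `i` is `H(a_{i+1} - a_i)`
(indices mod `n`), where `H` is the Heaviside step function. -/
def cycCode (a : List ℕ) : List ℕ :=
  List.zipWith (fun u v => if v ≤ u then 1 else 0) (a.rotate 1) a

/-- The cyclic 0-1 sequence `1(0)^{λ₀} 1(0)^{λ₁} ⋯ 1(0)^{λ_{x-1}}`. -/
def codeOf (lam : ℕ → ℕ) (x : ℕ) : List ℕ :=
  ((List.range x).map (fun j => 1 :: List.replicate (lam j) 0)).flatten

/-!
Rotate the cycle so that its code reads `(0^{μ₀} 1)(0^{μ₁} 1)⋯` with `μ_j = λ_{i+1+j}`, and cut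
it after the first `k = min K x` blocks. Inside the first piece only `k - 1` adjacent pairs are
ascents, so it splits into at most `K` descending runs and is a subsequence of `(n,…,1)^K`; by the
hypothesis on the `λ_j`, the second piece has at most `M - 1` descents, so it is a subsequence of
`(1,…,n)^M`. The target cycle is `(1,…,n)^M` followed by `(n,…,1)^K`, each with its last letter
dropped: the letters `n` and `1` at the two junctions are shared, and since the cycle has no
repeated entries, each shared letter is needed by at most one of the two pieces.
-/

open List

namespace List

variable {α : Type*}

theorem Sublist.of_sublist_append_singleton {u P : List α} {a : α} (hu : u <+ P ++ [a])
    (ha : a ∉ u) : u <+ P :=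
  hu.of_sublist_append_left fun _ hc h => ha (by rwa [mem_singleton.1 h] at hc)

theorem Sublist.of_sublist_cons {u P : List α} {a : α} (hu : u <+ a :: P) (ha : a ∉ u) :
    u <+ P :=
  Sublist.of_sublist_append_right (l₁ := [a])
    (fun _ hc h => ha (by rwa [mem_singleton.1 h] at hc)) hu

theorem exists_append_sublist_rotate {u v P Q : List α} {a b : α}
    (hu : u <+ a :: P ++ [b]) (hv : v <+ b :: Q ++ [a])
    (ha : a ∉ u ∨ a ∉ v) (hb : b ∉ u ∨ b ∉ v) :
    ∃ j, u ++ v <+ (a :: P ++ b :: Q).rotate j := by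
  have hrot : (a :: P ++ b :: Q).rotate 1 = P ++ b :: Q ++ [a] := by simp
  rcases ha with ha | ha <;> rcases hb with hb | hb
  · refine ⟨1, hrot ▸ ?_⟩
    have hu' : u <+ P := (hu.of_sublist_append_singleton hb).of_sublist_cons ha
    simpa using hu'.append hv
  · refine ⟨1, hrot ▸ ?_⟩
    have hu' : u <+ P ++ [b] := Sublist.of_sublist_cons (by simpa using hu) ha
    have hv' : v <+ Q ++ [a] := Sublist.of_sublist_cons (by simpa using hv) hb
    simpa using hu'.append hv'
  · refine ⟨0, ?_⟩
    have hu' : u <+ a :: P := Sublist.of_sublist_append_singleton (by simpa using hu) hb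
    have hv' : v <+ b :: Q := Sublist.of_sublist_append_singleton (by simpa using hv) ha
    simpa using hu'.append hv'
  · refine ⟨0, ?_⟩
    have hv' : v <+ Q := (hv.of_sublist_append_singleton ha).of_sublist_cons hb
    simpa using hu.append hv'

theorem exists_sublist_rotate_of_rotate_sublist {l w : List α} {s : ℕ} (h : l.rotate s <+ w) :
    ∃ j, l <+ w.rotate j := by
  rw [rotate_eq_drop_append_take_mod] at h
  obtain ⟨w₁, w₂, rfl, h₁, h₂⟩ := append_sublist_iff.1 h
  refine ⟨w₁.length, ?_⟩
  rw [rotate_append_length_eq, ← take_append_drop (s % l.length) l]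
  exact h₂.append h₁

theorem rotate_one_eq_of_append_singleton_eq_cons {l l' : List α} {a : α}
    (h : l ++ [a] = a :: l') : l.rotate 1 = l' := by
  rcases l with _ | ⟨b, l⟩
  · simp_all
  · obtain ⟨rfl, rfl⟩ := cons_eq_cons.1 h
    simp

theorem flatten_rotate_length_flatten_take (L : List (List α)) {i : ℕ} (hi : i ≤ L.length) :
    L.flatten.rotate (L.take i).flatten.length = (L.rotate i).flatten := by
  have h : L.flatten = (L.take i).flatten ++ (L.drop i).flatten := by
    rw [← flatten_append, take_append_drop]
  rw [h, rotate_append_length_eq, rotate_eq_drop_append_take hi, flatten_append]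

theorem range_rotate (x i : ℕ) : (range x).rotate i = (range x).map fun j => (i + j) % x := by
  refine ext_getElem (by simp) fun j _ _ => ?_
  simp [getElem_rotate, add_comm]

theorem exists_flatten_replicate_eq {w c : List α} {a b : α} (hw : w = a :: c ++ [b]) {M : ℕ}
    (hM : 0 < M) :
    ∃ Q, (replicate (M - 1) w).flatten ++ a :: c = a :: Q ∧
      (replicate M w).flatten = a :: Q ++ [b] := by
  obtain ⟨M, rfl⟩ := Nat.exists_eq_add_of_lt hM
  rcases M with _ | M
  · exact ⟨c, by simp [hw]⟩
  · refine ⟨c ++ [b] ++ (replicate M w).flatten ++ a :: c, by simp [hw, replicate_succ], ?_⟩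
    rw [replicate_succ', flatten_append]
    simp [hw, replicate_succ]

theorem range'_one_eq_of_one_lt {n : ℕ} (hn : 1 < n) :
    range' 1 n = 1 :: range' 2 (n - 2) ++ [n] ∧ range' 1 (n - 1) = 1 :: range' 2 (n - 2) := by
  obtain ⟨n, rfl⟩ : ∃ m, n = m + 2 := ⟨n - 2, by omega⟩
  refine ⟨?_, range'_succ ..⟩
  rw [range'_succ, range'_concat]
  simp [add_comm]

end List

def chainBreaks {α : Type*} (r : α → α → Prop) [DecidableRel r] : List α → ℕ
  | a :: b :: l => (if r a b then 0 else 1) + chainBreaks r (b :: l)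
  | _ => 0

section ChainBreaks

variable {α : Type*} {r : α → α → Prop} [DecidableRel r] [Std.Asymm r] {w : List α}

theorem cons_sublist_cons_append_flatten_replicate (hw : w.Pairwise r) :
    ∀ (l : List α) (b : α) (q : List α), b :: q <:+ w → (∀ c ∈ l, c ∈ w) →
      b :: l <+ b :: q ++ (replicate (chainBreaks r (b :: l)) w).flatten
  | [], _, _, _, _ => by simp
  | c :: l, b, q, hq, hl => by
    have hc : c ∈ w := hl c mem_cons_self
    have hl' : ∀ d ∈ l, d ∈ w := fun d hd => hl d (mem_cons_of_mem _ hd)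
    by_cases hbc : r b c
    · obtain ⟨p, hp⟩ := hq
      have hcq : c ∈ q := by
        rw [← hp] at hc hw
        rcases mem_append.1 hc with hcp | hcq
        · exact absurd hbc (Std.Asymm.asymm _ _ ((pairwise_append.1 hw).2.2 c hcp b mem_cons_self))
        · rcases mem_cons.1 hcq with rfl | hcq
          · exact absurd hbc (Std.Asymm.asymm _ _ hbc)
          · exact hcq
      obtain ⟨q₁, q₂, rfl⟩ := append_of_mem hcq
      have ih := cons_sublist_cons_append_flatten_replicate hw l c q₂
        ⟨p ++ b :: q₁, by simp [← hp]⟩ hl'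
      simp only [chainBreaks, if_pos hbc, zero_add]
      exact (ih.trans (by simp)).cons_cons b
    · obtain ⟨p', q', hw'⟩ := append_of_mem hc
      have ih := cons_sublist_cons_append_flatten_replicate hw l c q' ⟨p', hw'.symm⟩ hl'
      have hq' : c :: q' <+ w := hw' ▸ sublist_append_right p' _
      simp only [chainBreaks, if_neg hbc, add_comm 1, replicate_succ, flatten_cons]
      exact ((ih.trans (hq'.append_right _)).trans (sublist_append_right q _)).cons_cons b

theorem sublist_flatten_replicate_of_chainBreaks_lt (hw : w.Pairwise r) {l : List α}
    (hl : ∀ c ∈ l, c ∈ w) {d : ℕ} (hd : chainBreaks r l < d) :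
    l <+ (replicate d w).flatten := by
  rcases l with _ | ⟨b, l⟩
  · exact nil_sublist _
  obtain ⟨p, q, hpq⟩ := append_of_mem (hl b mem_cons_self)
  have hq : b :: q <:+ w := ⟨p, hpq.symm⟩
  have hpad : (replicate (chainBreaks r (b :: l) + 1) w).flatten <+ (replicate d w).flatten :=
    ((replicate_sublist_replicate w).2 hd).flatten
  refine ((cons_sublist_cons_append_flatten_replicate hw l b q hq
    (fun c hc => hl c (mem_cons_of_mem _ hc))).trans ?_).trans hpad
  rw [replicate_succ, flatten_cons]
  exact hq.sublist.append_right _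

end ChainBreaks

def linCode (l : List ℕ) : List ℕ :=
  List.zipWith (fun u v => if v ≤ u then 1 else 0) l.tail l

theorem linCode_cons_cons (a b : ℕ) (l : List ℕ) :
    linCode (a :: b :: l) = (if a ≤ b then 1 else 0) :: linCode (b :: l) := rfl

theorem chainBreaks_gt_eq_count_linCode :
    ∀ l : List ℕ, chainBreaks (· > ·) l = (linCode l).count 1
  | [] | [_] => rfl
  | a :: b :: l => by
    rw [chainBreaks, linCode_cons_cons, count_cons, chainBreaks_gt_eq_count_linCode (b :: l)]
    by_cases h : a ≤ b <;> simp [h, add_comm]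

theorem chainBreaks_lt_eq_count_linCode :
    ∀ {l : List ℕ}, l.Nodup → chainBreaks (· < ·) l = (linCode l).count 0
  | [], _ | [_], _ => rfl
  | a :: b :: l, hl => by
    have hab : a ≠ b := by simp_all
    rw [chainBreaks, linCode_cons_cons, count_cons, chainBreaks_lt_eq_count_linCode hl.of_cons]
    by_cases h : a ≤ b <;> simp [h, add_comm, lt_iff_le_and_ne, hab]

theorem linCode_take (l : List ℕ) (m : ℕ) :
    linCode (l.take m) = ((cycCode l).take m).dropLast := by
  refine ext_getElem (by simp [linCode, cycCode]) fun i h₁ _ => ?_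
  simp only [linCode, length_zipWith, length_tail, length_take] at h₁
  simp only [linCode, cycCode, getElem_zipWith, getElem_tail, getElem_take, getElem_dropLast,
    getElem_rotate, Nat.mod_eq_of_lt (show i + 1 < l.length by omega)]

theorem linCode_drop (l : List ℕ) (m : ℕ) :
    linCode (l.drop m) = ((cycCode l).drop m).dropLast := by
  refine ext_getElem (by simp [linCode, cycCode]; omega) fun i h₁ _ => ?_
  simp only [linCode, length_zipWith, length_tail, length_drop] at h₁
  simp only [linCode, cycCode, getElem_zipWith, getElem_tail, getElem_drop, getElem_dropLast,
    getElem_rotate, Nat.add_assoc, Nat.mod_eq_of_lt (show m + (i + 1) < l.length by omega)]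

theorem cycCode_rotate (l : List ℕ) (s : ℕ) : cycCode (l.rotate s) = (cycCode l).rotate s := by
  rw [cycCode, cycCode, zipWith_rotate_distrib _ _ _ _ (by simp), rotate_rotate, rotate_rotate,
    add_comm]

def blockCode (μ : ℕ → ℕ) (k : ℕ) : List ℕ :=
  ((range k).map fun j => replicate (μ j) 0 ++ [1]).flatten

section BlockCode

variable (μ : ℕ → ℕ)

theorem blockCode_succ (k : ℕ) :
    blockCode μ (k + 1) = blockCode μ k ++ (replicate (μ k) 0 ++ [1]) := by
  simp [blockCode, range_succ]

theorem count_zero_blockCode (k : ℕ) :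
    (blockCode μ k).count 0 = ∑ j ∈ Finset.range k, μ j := by
  induction k with
  | zero => rfl
  | succ k ih => simp [blockCode_succ, ih, Finset.sum_range_succ]

theorem count_one_blockCode (k : ℕ) : (blockCode μ k).count 1 = k := by
  induction k with
  | zero => rfl
  | succ k ih => simp [blockCode_succ, ih, count_replicate]

theorem count_one_dropLast_blockCode (k : ℕ) : (blockCode μ k).dropLast.count 1 = k - 1 := by
  cases k with
  | zero => rfl
  | succ k => simp [blockCode_succ, ← append_assoc, count_one_blockCode, count_replicate]

theorem blockCode_prefix {k x : ℕ} (h : k ≤ x) : blockCode μ k <+: blockCode μ x := by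
  induction x, h using Nat.le_induction with
  | base => exact prefix_refl _
  | succ x _ ih => exact ih.trans (blockCode_succ μ x ▸ prefix_append _ _)

theorem codeOf_append_one (x : ℕ) : codeOf μ x ++ [1] = 1 :: blockCode μ x := by
  induction x with
  | zero => rfl
  | succ x ih =>
    rw [blockCode_succ, ← cons_append, ← ih]
    simp [codeOf, range_succ]

theorem count_zero_codeOf (x : ℕ) : (codeOf μ x).count 0 = ∑ j ∈ Finset.range x, μ j := by
  simpa [count_zero_blockCode] using congrArg (count 0) (codeOf_append_one μ x)

end BlockCode

theorem exists_rotate_codeOf_eq_blockCode (lam : ℕ → ℕ) (x i : ℕ) :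
    ∃ t, (codeOf lam x).rotate t = blockCode (fun j => lam ((i + j) % x)) x := by
  rcases Nat.eq_zero_or_pos x with rfl | hx
  · exact ⟨0, rfl⟩
  set L := (range x).map fun j => 1 :: replicate (lam j) 0
  have hL : L.length = x := by simp [L]
  refine ⟨(L.take (i % x)).flatten.length + 1, ?_⟩
  have hrot : (L.rotate i).flatten = codeOf (fun j => lam ((i + j) % x)) x := by
    simp [L, ← map_rotate, range_rotate, codeOf, Function.comp_def]
  rw [← rotate_rotate, codeOf,
    flatten_rotate_length_flatten_take L (by rw [hL]; exact (Nat.mod_lt _ hx).le),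
    show i % x = i % L.length by rw [hL], rotate_mod, hrot]
  exact rotate_one_eq_of_append_singleton_eq_cons (codeOf_append_one _ x)

theorem exists_target_eq {n K M : ℕ} (hn : 1 < n) (hK : 0 < K) (hM : 0 < M) :
    ∃ P Q, (replicate K (range' 1 n).reverse).flatten = n :: P ++ [1] ∧
      (replicate M (range' 1 n)).flatten = 1 :: Q ++ [n] ∧
      (replicate (M - 1) (range' 1 n)).flatten ++ range' 1 (n - 1) ++
        (replicate (K - 1) (range' 1 n).reverse).flatten ++ (range' 2 (n - 1)).reverse =
        1 :: Q ++ n :: P := by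
  obtain ⟨hasc, hasc'⟩ := range'_one_eq_of_one_lt hn
  have hdesc : (range' 1 n).reverse = n :: (range' 2 (n - 2)).reverse ++ [1] := by simp [hasc]
  have hdesc' : (range' 2 (n - 1)).reverse = n :: (range' 2 (n - 2)).reverse := by
    rw [show n - 1 = n - 2 + 1 by omega, range'_concat]
    simp [show 2 + (n - 2) = n by omega]
  obtain ⟨Q, hA, hX⟩ := exists_flatten_replicate_eq hasc hM
  obtain ⟨P, hD, hY⟩ := exists_flatten_replicate_eq hdesc hK
  refine ⟨P, Q, hY, hX, ?_⟩
  rw [← hA, ← hD, hasc', hdesc']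
  simp

theorem exists_sublist_rotate_of_cycCode_eq_append {n K M : ℕ} {g pre suf : List ℕ}
    (hn : 1 < n) (hK : 0 < K) (hM : 0 < M) (hg : g.Perm (range' 1 n))
    (hcode : cycCode g = pre ++ suf) (hpre : pre.dropLast.count 1 < K) (hsuf : suf.count 0 < M) :
    ∃ j, g <+ ((replicate (M - 1) (range' 1 n)).flatten ++ range' 1 (n - 1) ++
      (replicate (K - 1) (range' 1 n).reverse).flatten ++ (range' 2 (n - 1)).reverse).rotate j := by
  have hnd : g.Nodup := hg.nodup_iff.2 nodup_range'
  have hmem : ∀ e ∈ g, e ∈ range' 1 n := fun e he => hg.subset he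
  have hC : g.take pre.length <+ (replicate K (range' 1 n).reverse).flatten := by
    refine sublist_flatten_replicate_of_chainBreaks_lt (r := (· > ·))
      (pairwise_reverse.2 (pairwise_lt_range' ..))
      (fun e he => mem_reverse.2 (hmem e (mem_of_mem_take he))) ?_
    rwa [chainBreaks_gt_eq_count_linCode, linCode_take, hcode, take_left]
  have hB : g.drop pre.length <+ (replicate M (range' 1 n)).flatten := by
    refine sublist_flatten_replicate_of_chainBreaks_lt (r := (· < ·)) (pairwise_lt_range' ..)
      (fun e he => hmem e (mem_of_mem_drop he)) ?_
    rw [chainBreaks_lt_eq_count_linCode (hnd.sublist (drop_sublist _ _)), linCode_drop, hcode,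
      drop_left]
    exact ((dropLast_sublist suf).count_le 0).trans_lt hsuf
  have hdisj : ∀ e, e ∉ g.take pre.length ∨ e ∉ g.drop pre.length := by
    have := disjoint_of_nodup_append ((take_append_drop pre.length g).symm ▸ hnd)
    exact fun e => not_and_or.1 fun h => this h.1 h.2
  obtain ⟨P, Q, hY, hX, hT⟩ := exists_target_eq hn hK hM
  obtain ⟨j, hj⟩ := exists_append_sublist_rotate (hY ▸ hC) (hX ▸ hB) (hdisj n) (hdisj 1)
  refine ⟨(1 :: Q).length + j, ?_⟩
  rw [hT, ← rotate_rotate, rotate_append_length_eq]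
  simpa using hj

theorem lemma_one_general (n x y K M : ℕ) (hn : 1 < n) (hK : 0 < K) (hM : 0 < M)
    (a : List ℕ) (ha : a.Perm (List.range' 1 n))
    (lam : ℕ → ℕ) (hlam : ∑ j ∈ Finset.range x, lam j = y)
    (r : ℕ) (hcode : cycCode (a.rotate r) = codeOf lam x)
    (i : ℕ) (hi : y + 1 ≤ M + ∑ j ∈ Finset.range K, lam ((i + 1 + j) % x)) :
    ∃ j, a.Sublist
      (((List.replicate (M - 1) (List.range' 1 n)).flatten ++ List.range' 1 (n - 1) ++
        (List.replicate (K - 1) (List.range' 1 n).reverse).flatten ++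
        (List.range' 2 (n - 1)).reverse).rotate j) := by
  set μ := fun j => lam ((i + 1 + j) % x)
  obtain ⟨t, ht⟩ := exists_rotate_codeOf_eq_blockCode lam x (i + 1)
  have hg : cycCode (a.rotate (r + t)) = blockCode μ x := by
    rw [← rotate_rotate, cycCode_rotate, hcode, ht]
  have hy : ∑ j ∈ Finset.range x, μ j = y := by
    rw [← count_zero_blockCode, ← ht, (rotate_perm _ _).count_eq, count_zero_codeOf, hlam]
  obtain ⟨suf, hsuf⟩ := blockCode_prefix μ (min_le_right K x)
  have hsuf0 : suf.count 0 < M := by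
    have := congrArg (count 0) hsuf
    rw [count_append, count_zero_blockCode, count_zero_blockCode, hy] at this
    rcases le_total K x with h | h
    · have hi' : y + 1 ≤ M + ∑ j ∈ Finset.range K, μ j := hi
      rw [min_eq_left h] at this
      omega
    · rw [min_eq_right h] at this
      omega
  have hpre : (blockCode μ (min K x)).dropLast.count 1 < K := by
    rw [count_one_dropLast_blockCode]
    omega
  obtain ⟨j, hj⟩ := exists_sublist_rotate_of_cycCode_eq_append hn hK hM
    ((rotate_perm _ _).trans ha) (hg.trans hsuf.symm) hpre hsuf0
  obtain ⟨j', hj'⟩ := exists_sublist_rotate_of_rotate_sublist hj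
  exact ⟨j + j', by rwa [rotate_rotate] at hj'⟩

theorem lemma_one (n x y K M : ℕ) (hn : 1 < n) (hx : 0 < x) (hK : 0 < K) (hM : 0 < M)
    (hxy : x + y = n) (a : List ℕ) (ha : a.Perm (List.range' 1 n))
    (lam : ℕ → ℕ) (hlam : ∑ j ∈ Finset.range x, lam j = y)
    (r : ℕ) (hcode : cycCode (a.rotate r) = codeOf lam x)
    (i : ℕ) (hi : y + 1 ≤ M + ∑ j ∈ Finset.range K, lam ((i + 1 + j) % x)) :
    ∃ j, a.Sublist
      (((List.replicate (M - 1) (List.range' 1 n)).flatten ++ List.range' 1 (n - 1) ++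
        (List.replicate (K - 1) (List.range' 1 n).reverse).flatten ++
        (List.range' 2 (n - 1)).reverse).rotate j) :=
  lemma_one_general n x y K M hn hK hM a ha lam hlam r hcode i hi
end
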